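/- The operation (α, a, v)·(β, b, w) = ( α + β + (1/2)ν(v, b) − (1/2)ν(w, a) + (1/12)ν(v, v∧w) + (1/12)ν(w, w∧v), a + b + (1/2) v∧w, v + w ) makes the set L₃ = 𝔱 × Λ²H × H into a group with identity (0, 0, 0). -/

import Mathlib

/-!
The identity and the inverses are immediate: `(0, 0, 0)` is neutral, and `(-α, -a, -v)` is inverse
to `(α, a, v)` because `v∧v = 0`. In an associativity check the `Λ²H`- and `H`-components are those
of a Heisenberg group, and in the `𝔱`-component all terms involving `α`, `a` cancel by bilinearity.
What remains, after using `¼ = 3 · (1/12)`, is `-(1/6)` times the cyclic sum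
`ν(u, v∧w) + ν(v, w∧u) + ν(w, u∧v)`, which vanishes because the coefficients
`2/3, -1/3, -1/3` in the formula for `ν` sum to zero.
-/

namespace Paper

open ExteriorAlgebra

open scoped TensorProduct

variable {R : Type*} [CommRing R] {H : Type*} [AddCommGroup H] [Module R H]

theorem wedge_mem (v w : H) : ι R v * ι R w ∈ ⋀[R]^2 H := by
  rw [show (⋀[R]^2 H) = LinearMap.range (ι R (M := H)) * LinearMap.range (ι R (M := H)) from
    sq _]
  exact Submodule.mul_mem_mul (LinearMap.mem_range_self _ v) (LinearMap.mem_range_self _ w)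

/-- The wedge product `H × H → Λ²H` as a bilinear map. -/
noncomputable def wedge : H →ₗ[R] H →ₗ[R] ↥(⋀[R]^2 H) :=
  LinearMap.mk₂ R (fun v w => ⟨ι R v * ι R w, wedge_mem v w⟩)
    (fun v v' w => Subtype.ext (by simp [add_mul]))
    (fun c v w => Subtype.ext (by simp [smul_mul_assoc]))
    (fun v w w' => Subtype.ext (by simp [mul_add]))
    (fun c v w => Subtype.ext (by simp [mul_smul_comm]))

/-- The submodule `𝔱 ⊆ H ⊗ Λ²H` spanned by the elements `u⊗(v∧w) − v⊗(w∧u)`. -/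
noncomputable def tSub (R : Type*) [CommRing R] (H : Type*) [AddCommGroup H] [Module R H] :
    Submodule R (H ⊗[R] ↥(⋀[R]^2 H)) :=
  Submodule.span R
    {x | ∃ u v w : H, x = u ⊗ₜ[R] (wedge v w) - v ⊗ₜ[R] (wedge w u)}

theorem map_exteriorPower_le (f : H →ₗ[R] H) (n : ℕ) :
    Submodule.map (ExteriorAlgebra.map f).toLinearMap (⋀[R]^n H) ≤ ⋀[R]^n H := by
  rw [show ((⋀[R]^n H : Submodule R (ExteriorAlgebra R H))) =
      (LinearMap.range (ι R (M := H))) ^ n from rfl, Submodule.map_pow]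
  have h1 : Submodule.map (ExteriorAlgebra.map f).toLinearMap
      (LinearMap.range (ι R (M := H))) ≤ LinearMap.range (ι R (M := H)) := by
    intro x hx
    rw [Submodule.mem_map] at hx
    obtain ⟨y, hy, rfl⟩ := hx
    rw [LinearMap.mem_range] at hy
    obtain ⟨v, rfl⟩ := hy
    exact ⟨f v, (map_apply_ι f v).symm⟩
  induction n with
  | zero => simp
  | succ n ih =>
      rw [pow_succ, pow_succ]
      exact mul_le_mul' ih h1

/-- The endomorphism `Λ²f` of `Λ²H` induced by an endomorphism `f` of `H`. -/
noncomputable def map2 (f : H →ₗ[R] H) : ↥(⋀[R]^2 H) →ₗ[R] ↥(⋀[R]^2 H) :=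
  (ExteriorAlgebra.map f).toLinearMap.restrict (p := ⋀[R]^2 H) (q := ⋀[R]^2 H)
    (fun x hx => map_exteriorPower_le f 2 (Submodule.mem_map_of_mem hx))

theorem map2_wedge (f : H →ₗ[R] H) (v w : H) :
    map2 f (wedge (R := R) v w) = wedge (R := R) (f v) (f w) :=
  Subtype.ext (by simp [map2, LinearMap.restrict_apply, wedge, map_apply_ι])

theorem tSub_stable (A : H →ₗ[R] H) (x : H ⊗[R] ↥(⋀[R]^2 H)) (hx : x ∈ tSub R H) :
    TensorProduct.map A (map2 A) x ∈ tSub R H := by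
  induction hx using Submodule.span_induction with
  | mem y hy =>
      obtain ⟨u, v, w, rfl⟩ := hy
      rw [map_sub, TensorProduct.map_tmul, TensorProduct.map_tmul, map2_wedge, map2_wedge]
      exact Submodule.subset_span ⟨A u, A v, A w, rfl⟩
  | zero => simpa using Submodule.zero_mem _
  | add a b ha hb iha ihb => rw [map_add]; exact Submodule.add_mem _ iha ihb
  | smul c a ha iha => rw [map_smul]; exact Submodule.smul_mem _ _ iha

/-- The action of an endomorphism `A` of `H` on `𝔱 ⊆ H ⊗ Λ²H`, by `A ⊗ Λ²A`. -/
noncomputable def tRestrict (A : H →ₗ[R] H) : ↥(tSub R H) →ₗ[R] ↥(tSub R H) :=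
  (TensorProduct.map A (map2 A)).restrict (p := tSub R H) (q := tSub R H) (tSub_stable A)


/-- Helper instances for the submodule `𝔱` (typeclass search struggles with the nested
subtype). -/
noncomputable instance tSubAddCommGroup : AddCommGroup ↥(tSub R H) :=
  @Submodule.addCommGroup R (H ⊗[R] ↥(⋀[R]^2 H)) _ _ _ (tSub R H)

noncomputable instance tSubModule : Module R ↥(tSub R H) :=
  @Submodule.module R (H ⊗[R] ↥(⋀[R]^2 H)) _ _ _ (tSub R H)

theorem wedge_anticomm (v w : H) : wedge (R := R) w v = -wedge (R := R) v w :=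
  Subtype.ext <| eq_neg_of_add_eq_zero_left (ι_add_mul_swap w v)

theorem wedge_self (v : H) : wedge (R := R) v v = 0 :=
  Subtype.ext (ι_sq_zero v)

theorem cyclic_sum_eq_zero [Invertible (3 : R)] (ν : H →ₗ[R] ↥(⋀[R]^2 H) →ₗ[R] ↥(tSub R H))
    (hν : ∀ u v w : H,
      (↑(ν u (wedge (R := R) v w)) : H ⊗[R] ↥(⋀[R]^2 H)) =
        ((2 : R) * ⅟(3 : R)) • u ⊗ₜ[R] wedge (R := R) v w -
          ⅟(3 : R) • v ⊗ₜ[R] wedge (R := R) w u -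
          ⅟(3 : R) • w ⊗ₜ[R] wedge (R := R) u v) (u v w : H) :
    ν u (wedge v w) + ν v (wedge w u) + ν w (wedge u v) = 0 := by
  apply Subtype.ext
  rw [Submodule.coe_add, Submodule.coe_add, hν, hν, hν, Submodule.coe_zero]
  module

section L3

variable [Invertible (2 : R)] [Invertible (3 : R)]

/-- The multiplication on `L₃ = 𝔱 × Λ²H × H`:
`(α, a, v)·(β, b, w) = (α + β + ½ν(v,b) − ½ν(w,a) + (1/12)ν(v, v∧w) + (1/12)ν(w, w∧v),
a + b + ½ v∧w, v + w)`. -/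
noncomputable def l3mul (ν : H →ₗ[R] ↥(⋀[R]^2 H) →ₗ[R] ↥(tSub R H))
    (x y : ↥(tSub R H) × ↥(⋀[R]^2 H) × H) : ↥(tSub R H) × ↥(⋀[R]^2 H) × H :=
  (x.1 + y.1 + ⅟(2 : R) • ν x.2.2 y.2.1 - ⅟(2 : R) • ν y.2.2 x.2.1 +
      (⅟(2 : R) * ⅟(2 : R) * ⅟(3 : R)) • ν x.2.2 (wedge (R := R) x.2.2 y.2.2) +
      (⅟(2 : R) * ⅟(2 : R) * ⅟(3 : R)) • ν y.2.2 (wedge (R := R) y.2.2 x.2.2),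
    x.2.1 + y.2.1 + ⅟(2 : R) • wedge (R := R) x.2.2 y.2.2,
    x.2.2 + y.2.2)

section Laws

variable (ν : H →ₗ[R] ↥(⋀[R]^2 H) →ₗ[R] ↥(tSub R H))

theorem zero_l3mul (x : ↥(tSub R H) × ↥(⋀[R]^2 H) × H) : l3mul ν (0, 0, 0) x = x := by
  simp [l3mul]

theorem l3mul_zero (x : ↥(tSub R H) × ↥(⋀[R]^2 H) × H) : l3mul ν x (0, 0, 0) = x := by
  simp [l3mul]

theorem l3mul_neg_self (x : ↥(tSub R H) × ↥(⋀[R]^2 H) × H) : l3mul ν x (-x) = (0, 0, 0) := by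
  simp [l3mul, wedge_self]

theorem neg_l3mul_self (x : ↥(tSub R H) × ↥(⋀[R]^2 H) × H) : l3mul ν (-x) x = (0, 0, 0) := by
  simp [l3mul, wedge_self]

theorem l3mul_assoc
    (hcyc : ∀ u v w : H, ν u (wedge v w) + ν v (wedge w u) + ν w (wedge u v) = 0)
    (x y z : ↥(tSub R H) × ↥(⋀[R]^2 H) × H) :
    l3mul ν (l3mul ν x y) z = l3mul ν x (l3mul ν y z) := by
  obtain ⟨α, a, u⟩ := x
  obtain ⟨β, b, v⟩ := y
  obtain ⟨γ, c, w⟩ := z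
  simp only [l3mul, Prod.mk.injEq]
  refine ⟨?_, ?_, add_assoc u v w⟩
  · set k : R := ⅟2 * ⅟2 * ⅟3
    have hk : ⅟(2 : R) * ⅟2 = 3 * k := by
      linear_combination (-(⅟(2 : R) * ⅟2)) * invOf_mul_self (3 : R)
    have hcyc' := hcyc u v w
    simp only [map_add, LinearMap.add_apply, map_smul, map_neg, smul_add, smul_neg, smul_smul, hk,
      wedge_anticomm u v, wedge_anticomm u w, wedge_anticomm v w] at hcyc' ⊢
    linear_combination (norm := module) (-(2 * k)) • hcyc'
  · simp only [map_add, LinearMap.add_apply, smul_add]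
    abel

end Laws

theorem stmt10_general (ν : H →ₗ[R] ↥(⋀[R]^2 H) →ₗ[R] ↥(tSub R H))
    (hν : ∀ u v w : H,
      (↑(ν u (wedge (R := R) v w)) : H ⊗[R] ↥(⋀[R]^2 H)) =
        ((2 : R) * ⅟(3 : R)) • u ⊗ₜ[R] wedge (R := R) v w -
          ⅟(3 : R) • v ⊗ₜ[R] wedge (R := R) w u -
          ⅟(3 : R) • w ⊗ₜ[R] wedge (R := R) u v) :
    (∀ x y z : ↥(tSub R H) × ↥(⋀[R]^2 H) × H,
      l3mul ν (l3mul ν x y) z = l3mul ν x (l3mul ν y z)) ∧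
    (∀ x : ↥(tSub R H) × ↥(⋀[R]^2 H) × H,
      l3mul ν (0, 0, 0) x = x ∧ l3mul ν x (0, 0, 0) = x) ∧
    (∀ x : ↥(tSub R H) × ↥(⋀[R]^2 H) × H,
      ∃ y, l3mul ν x y = (0, 0, 0) ∧ l3mul ν y x = (0, 0, 0)) :=
  ⟨l3mul_assoc ν (cyclic_sum_eq_zero ν hν), fun x => ⟨zero_l3mul ν x, l3mul_zero ν x⟩,
    fun x => ⟨-x, l3mul_neg_self ν x, neg_l3mul_self ν x⟩⟩

/-- With `ν : H × Λ²H → 𝔱` the bilinear map determined by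
`ν(u, v∧w) = (2/3) u⊗(v∧w) − (1/3) v⊗(w∧u) − (1/3) w⊗(u∧v)`, the above operation makes
`L₃ = 𝔱 × Λ²H × H` into a group with identity `(0, 0, 0)`. -/
theorem stmt10 (P : Ideal ℤ) [P.IsPrime] (hP2 : (2 : ℤ) ∉ P) (hP3 : (3 : ℤ) ∉ P)
    [Algebra ℤ R] [IsLocalization.AtPrime R P] {g : ℕ} (hg : 1 ≤ g)
    (e : Module.Basis (Fin (2 * g)) R H)
    (ν : H →ₗ[R] ↥(⋀[R]^2 H) →ₗ[R] ↥(tSub R H))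
    (hν : ∀ u v w : H,
      (↑(ν u (wedge (R := R) v w)) : H ⊗[R] ↥(⋀[R]^2 H)) =
        ((2 : R) * ⅟(3 : R)) • u ⊗ₜ[R] wedge (R := R) v w -
          ⅟(3 : R) • v ⊗ₜ[R] wedge (R := R) w u -
          ⅟(3 : R) • w ⊗ₜ[R] wedge (R := R) u v) :
    (∀ x y z : ↥(tSub R H) × ↥(⋀[R]^2 H) × H,
      l3mul ν (l3mul ν x y) z = l3mul ν x (l3mul ν y z)) ∧
    (∀ x : ↥(tSub R H) × ↥(⋀[R]^2 H) × H,
      l3mul ν (0, 0, 0) x = x ∧ l3mul ν x (0, 0, 0) = x) ∧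
    (∀ x : ↥(tSub R H) × ↥(⋀[R]^2 H) × H,
      ∃ y, l3mul ν x y = (0, 0, 0) ∧ l3mul ν y x = (0, 0, 0)) :=
  stmt10_general ν hν

end L3

end Paper
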